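/- For every n ≥ 1, the code A_n of Construction 3 is a non-cyclic 1-skew-tolerant binary Gray code of length 2n+1 that does not contain any of the n codewords Σ_{i=1}^{j} e_{−i} + Σ_{i=1}^{n} e_i for 1 ≤ j ≤ n; moreover its first transition occurs in position n and its last transition occurs in position −n. -/

import Mathlib

/-- Codewords `c` and `d` differ exactly at coordinate `i` (1-based), by `±1` there. -/
def TransAt {m : ℕ} (c d : List (ZMod m)) (i : ℕ) : Prop :=
  1 ≤ i ∧ i ≤ c.length ∧ c.length = d.length ∧
  c.take (i-1) = d.take (i-1) ∧ c.drop i = d.drop i ∧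
  (d.getD (i-1) 0 = c.getD (i-1) 0 + 1 ∨ d.getD (i-1) 0 = c.getD (i-1) 0 - 1)

/-- Cyclic Gray code whose transition positions `δ` are integers;
position `p ∈ ℤ` corresponds to 1-based coordinate `p + o`. -/
def CyclicGrayZ {m : ℕ} (C : List (List (ZMod m))) (o : ℕ) (δ : ℕ → ℤ) : Prop :=
  C.Nodup ∧ ∀ i < C.length, ∃ j : ℕ, (j : ℤ) = δ i + o ∧
    TransAt (C.getD i []) (C.getD ((i+1) % C.length) []) j

/-- Non-cyclic Gray code with integer transition positions, offset `o`. -/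
def PathGrayZ {m : ℕ} (C : List (List (ZMod m))) (o : ℕ) (δ : ℕ → ℤ) : Prop :=
  C.Nodup ∧ ∀ i, i + 1 < C.length → ∃ j : ℕ, (j : ℤ) = δ i + o ∧
    TransAt (C.getD i []) (C.getD (i+1) []) j

/-- `B_{n+1}` from `A_n` in Construction 3: the all-zero word followed by the four blocks
`(0,A_n,1)`, `(1,reverse A_n,1)`, `(1,A_n,0)`, `(0, reverse of A_n minus first word ,0)`. -/
def buildB3 (An : List (List (ZMod 2))) (len : ℕ) : List (List (ZMod 2)) :=
  List.replicate len (0 : ZMod 2) ::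
    (An.map (fun c => 0 :: c ++ [1]) ++ An.reverse.map (fun c => 1 :: c ++ [1]) ++
     An.map (fun c => 1 :: c ++ [0]) ++ An.tail.reverse.map (fun c => 0 :: c ++ [0]))

/-- The words `Σ_{i=1}^{j} e_{-i} + Σ_{i=1}^{n} e_i`, `j = 1, …, n+1`,
as lists of length `2n+3` (positions `-(n+1), …, n+1`). -/
def newWords (n : ℕ) : List (List (ZMod 2)) :=
  (List.range (n+1)).map (fun j =>
    List.replicate (n-j) (0 : ZMod 2) ++ List.replicate (j+1) 1 ++ [0] ++
      List.replicate n 1 ++ [0])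

/-- Construction 3, codes `A_n` (length `2n+1`, positions `-n, …, n`). -/
def c3A : ℕ → List (List (ZMod 2))
  | 0 => []
  | 1 => [[0,0,0],[0,0,1],[0,1,1],[1,1,1]]
  | (n+2) =>
    let B := buildB3 (c3A (n+1)) (2*n+5)
    B.take (B.length - n) ++ newWords (n+1)

/-- Construction 3, codes `B_n` (length `2n+1`). -/
def c3B : ℕ → List (List (ZMod 2))
  | 0 => []
  | (n+1) => buildB3 (c3A n) (2*n+3)

/-!
Induction on `n` with the invariant `IsSkewCode`, tracking each code together with its list of
transition positions (`GrayPath`). Padding every word with fixed end bits shifts all transitions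
by one and reversing a block reverses them, so if the transitions `T` of `A_n` form a `±1` walk
from `2n` to `0`, then those of `A_{n+1}` are
`2n+2, T+1, 0, reverse T + 1, 2n+2, T+1, 0, reverse (drop n T) + 1, n, n-1, …, 0`,
the isolated entries being the flips that join consecutive blocks. This is again a `±1` walk,
from `2n+2` to `0`, because `T` is at `n` after `n` steps: the first `n+3` words of `A_n` are the
staircase words `0^(2n+1-j) 1^j`. The words of `A_{n+1}` are distinct because words with different
end bits differ, while words with the same end bits come from distinct words of `A_n` or from the
new words `Σ e_{-i} + Σ e_i`, which `A_n` avoids.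
-/

namespace SkewGray

abbrev Word := List (ZMod 2)

/-- Positions are 0-based here, whereas `TransAt` counts from 1. -/
def FlipAt (u v : Word) (k : ℕ) : Prop :=
  ∃ p x s, p.length = k ∧ u = p ++ x :: s ∧ v = p ++ (x + 1) :: s

namespace FlipAt

variable {u v : Word} {k : ℕ}

theorem symm (h : FlipAt u v k) : FlipAt v u k := by
  obtain ⟨p, x, s, hp, rfl, rfl⟩ := h
  exact ⟨p, x + 1, s, hp, rfl, by rw [CharTwo.add_cancel_right]⟩

theorem append_right (w : Word) (h : FlipAt u v k) : FlipAt (u ++ w) (v ++ w) k := by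
  obtain ⟨p, x, s, hp, rfl, rfl⟩ := h
  exact ⟨p, x, s ++ w, hp, by simp, by simp⟩

theorem cons (x : ZMod 2) (h : FlipAt u v k) : FlipAt (x :: u) (x :: v) (k + 1) := by
  obtain ⟨p, y, s, hp, rfl, rfl⟩ := h
  exact ⟨x :: p, y, s, by simp [hp], rfl, rfl⟩

theorem getElem?_self (h : FlipAt u v k) : v[k]? = u[k]?.map (· + 1) := by
  obtain ⟨p, x, s, rfl, rfl, rfl⟩ := h
  simp

theorem getElem?_of_ne (h : FlipAt u v k) {i : ℕ} (hi : i ≠ k) : u[i]? = v[i]? := by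
  obtain ⟨p, x, s, rfl, rfl, rfl⟩ := h
  rcases lt_or_gt_of_ne hi with hlt | hgt
  · simp [List.getElem?_append_left hlt]
  · obtain ⟨j, rfl⟩ := Nat.exists_eq_add_of_lt hgt
    simp [List.getElem?_append_right (show p.length ≤ p.length + j + 1 by omega),
      show p.length + j + 1 - p.length = j + 1 by omega]

theorem unique {k' : ℕ} (h : FlipAt u v k) (h' : FlipAt u v k') : k = k' := by
  by_contra hne
  have hk : k < u.length := by obtain ⟨p, x, s, rfl, rfl, -⟩ := h; simp
  have := (h'.getElem?_of_ne hne).trans h.getElem?_self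
  rw [List.getElem?_eq_getElem hk] at this
  simp at this

theorem transAt (h : FlipAt u v k) : TransAt u v (k + 1) := by
  obtain ⟨p, x, s, rfl, rfl, rfl⟩ := h
  refine ⟨by omega, by simp, by simp, by simp, ?_, Or.inl (by simp)⟩
  simp [List.drop_append]

end FlipAt

inductive GrayPath : List Word → List ℕ → Prop
  | single (u : Word) : GrayPath [u] []
  | cons {u v : Word} {l : List Word} {k : ℕ} {t : List ℕ} :
      FlipAt u v k → GrayPath (v :: l) t → GrayPath (u :: v :: l) (k :: t)

namespace GrayPath

variable {l l' : List Word} {t t' : List ℕ}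

theorem length_eq (h : GrayPath l t) : l.length = t.length + 1 := by
  induction h with
  | single => rfl
  | cons _ _ ih => simpa using ih

theorem head?_append (h : GrayPath l t) : (l ++ l').head? = l.head? := by
  cases h <;> rfl

theorem flipAt_getD (h : GrayPath l t) {i : ℕ} (hi : i + 1 < l.length) :
    FlipAt (l.getD i []) (l.getD (i + 1) []) (t.getD i 0) := by
  induction h generalizing i with
  | single => simp at hi
  | cons hflip _ ih =>
    cases i with
    | zero => simpa using hflip
    | succ i => simpa using ih (by simpa using hi)

theorem map (f : Word → Word) (g : ℕ → ℕ)
    (hf : ∀ u v k, FlipAt u v k → FlipAt (f u) (f v) (g k))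
    (h : GrayPath l t) : GrayPath (l.map f) (t.map g) := by
  induction h with
  | single u => exact single (f u)
  | cons hflip _ ih => exact cons (hf _ _ _ hflip) ih

theorem append (h : GrayPath l t) (h' : GrayPath l' t') {u v : Word} {k : ℕ}
    (hu : l.getLast? = some u) (hv : l'.head? = some v) (hflip : FlipAt u v k) :
    GrayPath (l ++ l') (t ++ k :: t') := by
  induction h with
  | single w =>
    obtain rfl : w = u := by simpa using hu
    cases h' with
    | single => obtain rfl := Option.some_injective _ hv; exact cons hflip (single _)
    | cons hflip' h' => obtain rfl := Option.some_injective _ hv; exact cons hflip (cons hflip' h')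
  | cons hflip' _ ih => exact cons hflip' (ih (by simpa [List.getLast?_cons_cons] using hu))

theorem reverse (h : GrayPath l t) : GrayPath l.reverse t.reverse := by
  induction h with
  | single u => exact single u
  | @cons u v l k t hflip _ ih =>
    simpa using ih.append (single u) (by simp) rfl hflip.symm

theorem drop (h : GrayPath l t) {m : ℕ} (hm : m < l.length) : GrayPath (l.drop m) (t.drop m) := by
  induction m generalizing l t with
  | zero => simpa using h
  | succ m ih =>
    cases h with
    | single => simp at hm
    | cons _ h => simpa using ih h (by simp at hm ⊢; omega)

theorem range_map (f : ℕ → Word) (g : ℕ → ℕ) :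
    ∀ N, (∀ j < N, FlipAt (f j) (f (j + 1)) (g j)) →
      GrayPath ((List.range (N + 1)).map f) ((List.range N).map g)
  | 0, _ => single (f 0)
  | N + 1, hflip => by
    have h := (range_map f g N fun j hj => hflip j (by omega)).append (single _)
      (by simp [List.range_succ]) rfl (hflip N (by omega))
    simpa [List.range_succ] using h

theorem pathGrayZ (h : GrayPath l t) (hl : l.Nodup) (o : ℕ) :
    PathGrayZ l (o + 1) (fun i => (t.getD i 0 : ℤ) - o) :=
  ⟨hl, fun _ hi => ⟨_, by push_cast; ring, (h.flipAt_getD hi).transAt⟩⟩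

end GrayPath

def UnitWalk (t : List ℕ) (a b : ℕ) : Prop :=
  t.IsChain (fun x y => x + 1 = y ∨ y + 1 = x) ∧ t.head? = some a ∧ t.getLast? = some b

namespace UnitWalk

variable {t t' : List ℕ} {a b c d : ℕ}

theorem cons (a : ℕ) (h : UnitWalk t b c) (hab : a + 1 = b ∨ b + 1 = a) :
    UnitWalk (a :: t) a c := by
  obtain ⟨hchain, hb, hc⟩ := h
  obtain ⟨xs, rfl⟩ : ∃ xs, t = b :: xs := by
    cases t with
    | nil => simp at hb
    | cons x xs => exact ⟨xs, by simpa using hb⟩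
  exact ⟨List.isChain_cons_cons.2 ⟨hab, hchain⟩, rfl,
    by simpa [List.getLast?_cons_cons] using hc⟩

theorem append (h : UnitWalk t a b) (h' : UnitWalk t' c d) (hbc : b + 1 = c ∨ c + 1 = b) :
    UnitWalk (t ++ t') a d := by
  obtain ⟨hchain, ha, hb⟩ := h
  obtain ⟨hchain', hc, hd⟩ := h'
  refine ⟨List.isChain_append.2 ⟨hchain, hchain', ?_⟩, ?_, ?_⟩
  · simp [hb, hc, hbc]
  · simp [List.head?_append, ha]
  · simp [List.getLast?_append, hd]

theorem reverse (h : UnitWalk t a b) : UnitWalk t.reverse b a := by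
  obtain ⟨hchain, ha, hb⟩ := h
  refine ⟨List.isChain_reverse.2 (hchain.imp fun _ _ h => h.symm), ?_, ?_⟩ <;> simpa

theorem map_succ (h : UnitWalk t a b) : UnitWalk (t.map (· + 1)) (a + 1) (b + 1) := by
  obtain ⟨hchain, ha, hb⟩ := h
  refine ⟨(List.isChain_map _).2 (hchain.imp fun _ _ h => ?_), ?_, ?_⟩ <;> simp [*]

theorem drop (h : UnitWalk t a b) {m : ℕ} (hm : t[m]? = some c) : UnitWalk (t.drop m) c b := by
  obtain ⟨hchain, -, hb⟩ := h
  have hlt : m < t.length := (List.getElem?_eq_some_iff.1 hm).1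
  refine ⟨hchain.drop m, by simpa [List.head?_drop] using hm, ?_⟩
  rw [List.getLast?_drop, if_neg (by omega), hb]

theorem range_reverse (n : ℕ) : UnitWalk (List.range (n + 1)).reverse n 0 := by
  refine ⟨List.isChain_reverse.2 ((List.isChain_range_succ _ n).2 fun _ _ => Or.inr rfl),
    ?_, ?_⟩
  · simp [List.range_succ]
  · simp [List.head?_range]

theorem getD_zero (h : UnitWalk t a b) : t.getD 0 0 = a := by
  obtain ⟨-, ha, -⟩ := h
  cases t <;> simp_all

theorem getD_length_sub_one (h : UnitWalk t a b) : t.getD (t.length - 1) 0 = b := by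
  obtain ⟨-, -, hb⟩ := h
  rw [List.getLast?_eq_getElem?] at hb
  simp [List.getD_eq_getElem?_getD, hb]

theorem abs_sub_getD (h : UnitWalk t a b) {i : ℕ} (hi : i + 1 < t.length) :
    |(t.getD i 0 : ℤ) - t.getD (i + 1) 0| = 1 := by
  have hstep := List.isChain_iff_getElem.1 h.1 i hi
  rw [List.getD_eq_getElem _ _ (by omega), List.getD_eq_getElem _ _ hi]
  rcases hstep with hstep | hstep <;> rw [← hstep] <;> simp

end UnitWalk

theorem cons_replicate_append {α : Type*} (a : α) (n : ℕ) (l : List α) :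
    a :: (List.replicate n a ++ l) = List.replicate n a ++ a :: l := by
  rw [← List.cons_append, ← List.replicate_succ, List.replicate_succ', List.append_assoc,
    List.singleton_append]

def pad (x y : ZMod 2) (u : Word) : Word := x :: u ++ [y]

@[simp] theorem length_pad (x y : ZMod 2) (u : Word) : (pad x y u).length = u.length + 2 := by
  simp [pad]

@[simp] theorem pad_inj {x y x' y' : ZMod 2} {u u' : Word} :
    pad x y u = pad x' y' u' ↔ x = x' ∧ u = u' ∧ y = y' := by
  simp [pad]

theorem pad_injective (x y : ZMod 2) : Function.Injective (pad x y) :=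
  fun _ _ h => (pad_inj.1 h).2.1

@[simp] theorem pad_mem_map_pad {x y x' y' : ZMod 2} {u : Word} {l : List Word} :
    pad x y u ∈ l.map (pad x' y') ↔ x = x' ∧ y = y' ∧ u ∈ l := by
  simp only [List.mem_map, pad_inj]
  aesop

theorem disjoint_map_pad {x y x' y' : ZMod 2} (h : x ≠ x' ∨ y ≠ y') (l l' : List Word) :
    (l.map (pad x y)).Disjoint (l'.map (pad x' y')) := by
  simp only [List.disjoint_left, List.mem_map]
  rintro _ ⟨u, -, rfl⟩ ⟨v, -, huv⟩
  simp only [pad_inj] at huv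
  tauto

theorem FlipAt.pad {u v : Word} {k : ℕ} (x y : ZMod 2) (h : FlipAt u v k) :
    FlipAt (pad x y u) (pad x y v) (k + 1) :=
  (h.append_right [y]).cons x

theorem flipAt_replicate_pad (n : ℕ) :
    FlipAt (List.replicate (n + 2) 0) (pad 0 1 (List.replicate n 0)) (n + 1) :=
  ⟨List.replicate (n + 1) 0, 0, [], by simp, by simp [List.replicate_succ'],
    by simp [pad, List.replicate_succ]⟩

theorem flipAt_pad_head (x y : ZMod 2) (u : Word) : FlipAt (pad x y u) (pad (x + 1) y u) 0 :=
  ⟨[], x, u ++ [y], rfl, rfl, rfl⟩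

theorem flipAt_pad_last (x y : ZMod 2) (u : Word) :
    FlipAt (pad x y u) (pad x (y + 1) u) (u.length + 1) :=
  ⟨x :: u, y, [], rfl, by simp [pad], by simp [pad]⟩

def stair (n j : ℕ) : Word := List.replicate (n - j) 0 ++ List.replicate j 1

theorem stair_zero (n : ℕ) : stair n 0 = List.replicate n 0 := by
  simp [stair]

theorem flipAt_stair {n j : ℕ} (hj : j < n) :
    FlipAt (stair n j) (stair n (j + 1)) (n - 1 - j) := by
  refine ⟨List.replicate (n - 1 - j) 0, 0, List.replicate j 1, by simp, ?_, ?_⟩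
  · rw [stair, show n - j = n - 1 - j + 1 by omega, List.replicate_succ']
    simp
  · simp [stair, List.replicate_succ, show n - (j + 1) = n - 1 - j by omega]

theorem pad_stair {n j : ℕ} (hj : j ≤ n) : pad 0 1 (stair n j) = stair (n + 2) (j + 1) := by
  rw [pad, stair, stair, show n + 2 - (j + 1) = n - j + 1 by omega, List.replicate_succ,
    List.replicate_succ']
  simp

/-- The word `Σ_{i=1}^{j} e_{-i} + Σ_{i=1}^{n} e_i` of length `2n+1`. -/
def forbidden (n j : ℕ) : Word :=
  List.replicate (n - j) 0 ++ List.replicate j 1 ++ [0] ++ List.replicate n 1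

theorem count_forbidden (n j : ℕ) : (forbidden n j).count 1 = j + n := by
  simp [forbidden, List.count_replicate]

theorem length_forbidden {n j : ℕ} (hj : j ≤ n) : (forbidden n j).length = 2 * n + 1 := by
  simp [forbidden]; omega

theorem forbidden_injective (n : ℕ) : Function.Injective (forbidden n) := fun j j' h => by
  simpa [count_forbidden] using congrArg (List.count 1) h

theorem forbidden_ne_replicate_zero {n j : ℕ} (hj : 1 ≤ j) (k : ℕ) :
    forbidden n j ≠ List.replicate k 0 := fun h => by
  have := congrArg (List.count 1) h
  simp [count_forbidden, List.count_replicate] at this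
  omega

theorem pad_forbidden {n j : ℕ} (hj : j ≤ n) :
    pad 0 1 (forbidden n j) = forbidden (n + 1) j := by
  rw [pad, forbidden, forbidden, show n + 1 - j = n - j + 1 by omega, List.replicate_succ,
    List.replicate_succ' (n := n)]
  simp

theorem pad_forbidden_self (n : ℕ) : pad 1 1 (forbidden n n) = forbidden (n + 1) (n + 1) := by
  simpa [pad, forbidden, List.replicate_succ] using (cons_replicate_append (1 : ZMod 2) n []).symm

def newWord (n j : ℕ) : Word := stair (n + 1) j ++ 0 :: (List.replicate n 1 ++ [0])

theorem newWords_eq_map_newWord (n : ℕ) :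
    newWords n = (List.range (n + 1)).map fun j => newWord n (j + 1) := by
  simp [newWords, newWord, stair]


theorem flipAt_newWord {n j : ℕ} (hj : j < n + 1) :
    FlipAt (newWord n j) (newWord n (j + 1)) (n - j) := by
  simpa [newWord] using (flipAt_stair hj).append_right _

theorem flipAt_pad_stair_newWord (n : ℕ) :
    FlipAt (pad 0 0 (stair (2 * n + 1) n)) (newWord n 1) n := by
  have hpad : pad 0 0 (stair (2 * n + 1) n) = newWord n 0 := by
    simp [pad, stair, newWord, show 2 * n + 1 - n = n + 1 by omega, List.replicate_succ,
      cons_replicate_append]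
  simpa [hpad] using flipAt_newWord (n := n) (j := 0) (by omega)

theorem grayPath_newWords (n : ℕ) : GrayPath (newWords n) (List.range n).reverse := by
  have h := GrayPath.range_map (fun j => newWord n (j + 1)) (fun j => n - (j + 1)) n
    fun j hj => flipAt_newWord (by omega)
  have hrev : (List.range n).reverse = (List.range n).map fun j => n - (j + 1) := by
    simp [List.range_eq_range', List.reverse_range', Nat.sub_sub, Nat.add_comm]
  rwa [← newWords_eq_map_newWord, ← hrev] at h

theorem newWords_eq_pad (n : ℕ) :
    newWords n = (List.range n).map (fun j => pad 0 0 (forbidden n (j + 1))) ++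
      [pad 1 0 (forbidden n n)] := by
  rw [newWords, List.range_succ, List.map_append]
  congr 1
  · refine List.map_congr_left fun j hj => ?_
    rw [List.mem_range] at hj
    rw [show n - j = n - (j + 1) + 1 by omega]
    simp [pad, forbidden, List.replicate_succ]
  · simp [pad, forbidden, List.replicate_succ]

def succCode (m : ℕ) (A : List Word) : List Word :=
  List.replicate (2 * m + 5) 0 :: (A.map (pad 0 1) ++ (A.reverse.map (pad 1 1) ++
    (A.map (pad 1 0) ++ ((A.drop (m + 1)).reverse.map (pad 0 0) ++ newWords (m + 1)))))

theorem c3A_succ_succ {m : ℕ} (hm : m + 1 ≤ (c3A (m + 1)).length) :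
    c3A (m + 2) = succCode m (c3A (m + 1)) := by
  set A := c3A (m + 1)
  have hsplit : A.tail.reverse.map (pad 0 0) =
      (A.drop (m + 1)).reverse.map (pad 0 0) ++ (A.tail.take m).reverse.map (pad 0 0) := by
    rw [← List.map_append, ← List.reverse_append, ← List.drop_tail, List.take_append_drop]
  have hB : buildB3 A (2 * m + 5) =
      (List.replicate (2 * m + 5) 0 :: (A.map (pad 0 1) ++ A.reverse.map (pad 1 1) ++
        A.map (pad 1 0) ++ (A.drop (m + 1)).reverse.map (pad 0 0))) ++
        (A.tail.take m).reverse.map (pad 0 0) := by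
    simp only [buildB3, ← hsplit, List.cons_append, List.append_assoc]
    rfl
  have htail : ((A.tail.take m).reverse.map (pad 0 0)).length = m := by
    simp; omega
  show (buildB3 A (2 * m + 5)).take ((buildB3 A (2 * m + 5)).length - m) ++ newWords (m + 1) = _
  rw [hB, List.length_append, htail, Nat.add_sub_cancel, List.take_left]
  simp [succCode]

structure IsSkewCode (n : ℕ) (A : List Word) : Prop where
  length_eq : ∀ u ∈ A, u.length = 2 * n + 1
  nodup : A.Nodup
  getElem?_eq_stair : ∀ j ≤ n + 2, A[j]? = some (stair (2 * n + 1) j)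
  forbidden_not_mem : ∀ j, 1 ≤ j → j ≤ n → forbidden n j ∉ A
  exists_path : ∃ T, GrayPath A T ∧ UnitWalk T (2 * n) 0

theorem isSkewCode_one : IsSkewCode 1 (c3A 1) where
  length_eq := by decide
  nodup := by decide
  getElem?_eq_stair j hj := by interval_cases j <;> rfl
  forbidden_not_mem j hj hj' := by
    obtain rfl : j = 1 := by omega
    decide
  exists_path := ⟨[2, 1, 0],
    .cons ⟨[0, 0], 0, [], rfl, rfl, rfl⟩ (.cons ⟨[0], 0, [1], rfl, rfl, rfl⟩
      (.cons ⟨[], 0, [1, 1], rfl, rfl, rfl⟩ (.single _))),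
    ((UnitWalk.range_reverse 0).cons 1 (by omega)).cons 2 (by omega)⟩

-- The words of `succCode m A`, grouped by their two end bits.
theorem succCode_perm (m : ℕ) (A : List Word) : (succCode m A).Perm
    (A.map (pad 0 1) ++ A.reverse.map (pad 1 1) ++
      (A ++ [forbidden (m + 1) (m + 1)]).map (pad 1 0) ++
      (List.replicate (2 * m + 3) 0 :: ((A.drop (m + 1)).reverse ++
        (List.range (m + 1)).map fun j => forbidden (m + 1) (j + 1))).map (pad 0 0)) := by
  have hz : List.replicate (2 * m + 5) (0 : ZMod 2) = pad 0 0 (List.replicate (2 * m + 3) 0) := by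
    rw [pad, List.cons_append, ← List.replicate_succ', List.replicate_succ]
  rw [succCode, newWords_eq_pad, hz]
  refine List.perm_iff_count.2 fun a => ?_
  simp [List.count_append, List.count_cons, Function.comp_def]
  omega

def succTrans (m : ℕ) (T : List ℕ) : List ℕ :=
  2 * (m + 2) :: (T.map (· + 1) ++ 0 :: (T.reverse.map (· + 1) ++ 2 * (m + 2) ::
    (T.map (· + 1) ++ 0 :: ((T.drop (m + 1)).reverse.map (· + 1) ++
      (m + 1) :: (List.range (m + 1)).reverse))))

theorem UnitWalk.succTrans {m : ℕ} {T : List ℕ} (hW : UnitWalk T (2 * (m + 1)) 0)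
    (hT : T[m + 1]? = some (m + 1)) : UnitWalk (succTrans m T) (2 * (m + 2)) 0 := by
  have w1 := hW.map_succ
  have w2 := hW.reverse.map_succ
  have w4 := (hW.drop hT).reverse.map_succ
  have w5 := (UnitWalk.range_reverse m).cons (m + 1) (by omega)
  exact ((w1.append ((w2.append ((w1.append ((w4.append w5 (by omega)).cons 0 (by omega))
    (by omega)).cons (2 * (m + 2)) (by omega)) (by omega)).cons 0 (by omega)) (by omega)).cons
    (2 * (m + 2)) (by omega))

namespace IsSkewCode

variable {m : ℕ} {A : List Word}

theorem add_two_lt_length (hA : IsSkewCode m A) : m + 2 < A.length :=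
  (List.getElem?_eq_some_iff.1 (hA.getElem?_eq_stair (m + 2) le_rfl)).1

theorem getD_eq_stair (hA : IsSkewCode m A) {j : ℕ} (hj : j ≤ m + 2) :
    A.getD j [] = stair (2 * m + 1) j := by
  simp [List.getD_eq_getElem?_getD, hA.getElem?_eq_stair j hj]

theorem zero_not_mem_drop (hA : IsSkewCode m A) (k : ℕ) :
    List.replicate (2 * m + 1) 0 ∉ A.drop (k + 1) := by
  have h0 := hA.getElem?_eq_stair 0 (by omega)
  obtain ⟨B, rfl⟩ : ∃ B, A = List.replicate (2 * m + 1) 0 :: B := by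
    cases A with
    | nil => simp at h0
    | cons u B => exact ⟨B, by simpa [stair_zero] using h0⟩
  exact fun h => (List.nodup_cons.1 hA.nodup).1 (List.drop_subset _ _ h)

theorem length_succCode (hA : IsSkewCode (m + 1) A) :
    ∀ u ∈ succCode m A, u.length = 2 * (m + 2) + 1 := by
  have hlen : ∀ v ∈ A, v.length = 2 * m + 3 := hA.length_eq
  have hpad : ∀ {x y : ZMod 2} {v : Word}, v.length = 2 * m + 3 →
      (pad x y v).length = 2 * (m + 2) + 1 := fun hv => by rw [length_pad, hv]; ring
  intro u hu
  simp only [(succCode_perm m A).mem_iff, List.mem_append, List.mem_map, List.mem_cons,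
    List.mem_reverse, List.mem_range, List.not_mem_nil, or_false] at hu
  rcases hu with (((⟨v, hv, rfl⟩ | ⟨v, hv, rfl⟩) | ⟨v, hv | rfl, rfl⟩) |
    ⟨v, rfl | hv | ⟨j, hj, rfl⟩, rfl⟩)
  · exact hpad (hlen v hv)
  · exact hpad (hlen v hv)
  · exact hpad (hlen v hv)
  · exact hpad (length_forbidden le_rfl)
  · exact hpad (List.length_replicate ..)
  · exact hpad (hlen v (List.mem_of_mem_drop hv))
  · exact hpad (length_forbidden (by omega))

theorem nodup_succCode (hA : IsSkewCode (m + 1) A) : (succCode m A).Nodup := by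
  have h10 : (A ++ [forbidden (m + 1) (m + 1)]).Nodup :=
    hA.nodup.append (List.nodup_singleton _) (List.disjoint_singleton.2
      (hA.forbidden_not_mem (m + 1) (by omega) le_rfl))
  have hfs : ((List.range (m + 1)).map fun j => forbidden (m + 1) (j + 1)).Nodup :=
    List.nodup_range.map ((forbidden_injective _).comp Nat.succ_injective)
  have hdrop : (A.drop (m + 1)).reverse.Nodup :=
    List.nodup_reverse.2 (hA.nodup.sublist (List.drop_sublist _ _))
  have h00 : (List.replicate (2 * m + 3) 0 :: ((A.drop (m + 1)).reverse ++
      (List.range (m + 1)).map fun j => forbidden (m + 1) (j + 1))).Nodup := by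
    refine List.nodup_cons.2 ⟨?_, hdrop.append hfs ?_⟩
    · simp only [List.mem_append, List.mem_reverse, List.mem_map, not_or, not_exists, not_and]
      exact ⟨hA.zero_not_mem_drop m, fun j _ h => forbidden_ne_replicate_zero (by omega) _ h⟩
    · simp only [List.disjoint_right, List.mem_reverse, List.mem_map, List.mem_range]
      rintro _ ⟨j, hj, rfl⟩ hj'
      exact hA.forbidden_not_mem (j + 1) (by omega) (by omega) (List.mem_of_mem_drop hj')
  rw [(succCode_perm m A).nodup_iff]
  exact (((hA.nodup.map (pad_injective 0 1)).append
    ((List.nodup_reverse.2 hA.nodup).map (pad_injective 1 1))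
      (disjoint_map_pad (by decide) _ _)).append
    (h10.map (pad_injective 1 0)) (List.disjoint_append_left.2
      ⟨disjoint_map_pad (by decide) _ _, disjoint_map_pad (by decide) _ _⟩)).append
    (h00.map (pad_injective 0 0)) (List.disjoint_append_left.2
      ⟨List.disjoint_append_left.2
        ⟨disjoint_map_pad (by decide) _ _, disjoint_map_pad (by decide) _ _⟩,
        disjoint_map_pad (by decide) _ _⟩)

theorem forbidden_not_mem_succCode (hA : IsSkewCode (m + 1) A) {j : ℕ} (hj : 1 ≤ j)
    (hjm : j ≤ m + 2) : forbidden (m + 2) j ∉ succCode m A := by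
  rw [(succCode_perm m A).mem_iff]
  rcases Nat.lt_or_ge j (m + 2) with hlt | hge
  · rw [show forbidden (m + 2) j = pad 0 1 (forbidden (m + 1) j) from
      (pad_forbidden (by omega)).symm]
    simpa [-List.map_drop] using hA.forbidden_not_mem j hj (by omega)
  · obtain rfl : j = m + 2 := by omega
    rw [← pad_forbidden_self (m + 1)]
    simpa [-List.map_drop] using hA.forbidden_not_mem (m + 1) (by omega) le_rfl

theorem getElem?_succCode (hA : IsSkewCode (m + 1) A) {j : ℕ} (hj : j ≤ m + 4) :
    (succCode m A)[j]? = some (stair (2 * (m + 2) + 1) j) := by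
  cases j with
  | zero => simp [succCode, stair_zero, show 2 * (m + 2) + 1 = 2 * m + 5 by ring]
  | succ j =>
    have hjA : j < A.length := by have := hA.add_two_lt_length; omega
    rw [succCode, List.getElem?_cons_succ, List.getElem?_append_left (by simpa using hjA),
      List.getElem?_map, hA.getElem?_eq_stair j (by omega), Option.map_some,
      pad_stair (by omega), show 2 * (m + 1) + 1 + 2 = 2 * (m + 2) + 1 by ring]

theorem getElem?_of_grayPath (hA : IsSkewCode (m + 1) A) {T : List ℕ} (hT : GrayPath A T) :
    T[m + 1]? = some (m + 1) := by
  have h := hT.flipAt_getD (i := m + 1) (by have := hA.add_two_lt_length; omega)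
  rw [hA.getD_eq_stair (by omega), hA.getD_eq_stair (by omega)] at h
  have hTlen := hT.length_eq
  rw [List.getElem?_eq_getElem (by have := hA.add_two_lt_length; omega),
    ← List.getD_eq_getElem (d := 0), h.unique (flipAt_stair (by omega))]
  congr 1; omega

theorem grayPath_succCode (hA : IsSkewCode (m + 1) A) {T : List ℕ} (hT : GrayPath A T) :
    GrayPath (succCode m A) (succTrans m T) := by
  have hlen := hA.add_two_lt_length
  have hA0 : A.head? = some (List.replicate (2 * m + 3) 0) := by
    rw [List.head?_eq_getElem?, hA.getElem?_eq_stair 0 (by omega), stair_zero,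
      show 2 * (m + 1) + 1 = 2 * m + 3 by ring]
  obtain ⟨L, hL⟩ : ∃ L, A.getLast? = some L :=
    ⟨_, List.getLast?_eq_some_getLast (List.ne_nil_of_length_pos (by omega))⟩
  have p1 := hT.map (pad 0 1) (· + 1) fun _ _ _ h => h.pad 0 1
  have p2 := hT.reverse.map (pad 1 1) (· + 1) fun _ _ _ h => h.pad 1 1
  have p3 := hT.map (pad 1 0) (· + 1) fun _ _ _ h => h.pad 1 0
  have p4 := (hT.drop (m := m + 1) (by omega)).reverse.map (pad 0 0) (· + 1)
    fun _ _ _ h => h.pad 0 0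
  have p45 := p4.append (grayPath_newWords (m + 1))
    (by simp [hA.getElem?_eq_stair (m + 1) (by omega)])
    (by rw [newWords_eq_map_newWord, List.range_succ_eq_map]; rfl)
    (flipAt_pad_stair_newWord (m + 1))
  have p345 := p3.append p45 (by simp [hL])
    (by rw [p4.head?_append]; simp [hL, List.getLast?_drop]; exact ⟨by omega, rfl⟩)
    (flipAt_pad_head 1 0 L)
  have j2 : FlipAt (pad 1 1 (List.replicate (2 * m + 3) 0)) (pad 1 0 (List.replicate (2 * m + 3) 0))
      (2 * (m + 2)) := by
    have h := flipAt_pad_last 1 1 (List.replicate (2 * m + 3) 0)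
    rwa [List.length_replicate, show 2 * m + 3 + 1 = 2 * (m + 2) by ring] at h
  have p2345 := p2.append p345 (by simp [hA0]) (by rw [p3.head?_append]; simp [hA0]) j2
  have p12345 := p1.append p2345 (by simp [hL]) (by rw [p2.head?_append]; simp [hL])
    (flipAt_pad_head 0 1 L)
  have j0 : FlipAt (List.replicate (2 * m + 5) 0) (pad 0 1 (List.replicate (2 * m + 3) 0))
      (2 * (m + 2)) := by
    have h := flipAt_replicate_pad (2 * m + 3)
    rwa [show 2 * m + 3 + 2 = 2 * m + 5 by ring, show 2 * m + 3 + 1 = 2 * (m + 2) by ring] at h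
  exact (GrayPath.single _).append p12345 rfl (by rw [p1.head?_append]; simp [hA0]) j0

protected theorem succCode (hA : IsSkewCode (m + 1) A) : IsSkewCode (m + 2) (succCode m A) where
  length_eq := hA.length_succCode
  nodup := hA.nodup_succCode
  getElem?_eq_stair _ hj := hA.getElem?_succCode hj
  forbidden_not_mem _ hj hjm := hA.forbidden_not_mem_succCode hj hjm
  exists_path :=
    have ⟨_, hT, hW⟩ := hA.exists_path
    ⟨_, hA.grayPath_succCode hT, hW.succTrans (hA.getElem?_of_grayPath hT)⟩

end IsSkewCode

theorem isSkewCode_c3A : ∀ n, 1 ≤ n → IsSkewCode n (c3A n)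
  | 1, _ => isSkewCode_one
  | m + 2, _ => by
    have hA := isSkewCode_c3A (m + 1) (by omega)
    rw [c3A_succ_succ (by have := hA.add_two_lt_length; omega)]
    exact hA.succCode

end SkewGray

open SkewGray in
theorem stmt9 : ∀ n : ℕ, 1 ≤ n →
    (∀ c ∈ c3A n, c.length = 2*n+1) ∧
    (∀ j : ℕ, 1 ≤ j → j ≤ n →
      (List.replicate (n-j) (0 : ZMod 2) ++ List.replicate j 1 ++ [0] ++
        List.replicate n 1) ∉ c3A n) ∧
    ∃ δ : ℕ → ℤ, PathGrayZ (c3A n) (n+1) δ ∧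
      (∀ i, i + 2 < (c3A n).length → |δ i - δ (i+1)| = 1) ∧
      δ 0 = (n : ℤ) ∧ δ ((c3A n).length - 2) = -(n : ℤ) := by
  intro n hn
  obtain ⟨hlen, hnodup, -, hforb, T, hT, hW⟩ := isSkewCode_c3A n hn
  have hTlen := hT.length_eq
  refine ⟨hlen, hforb, fun i => (T.getD i 0 : ℤ) - n, hT.pathGrayZ hnodup n,
    fun i hi => ?_, ?_, ?_⟩
  · rw [sub_sub_sub_cancel_right]
    exact hW.abs_sub_getD (by omega)
  · simp only [hW.getD_zero]
    push_cast; ring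
  · simp only [hTlen, show T.length + 1 - 2 = T.length - 1 by omega, hW.getD_length_sub_one]
    simp
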